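/- For every g ∈ O₄(ℂ) (i.e., gᵀ J₄ g = J₄), one has ρ ∘ (⋀²g) = det(g) · (⋀²g) ∘ ρ as linear maps on ⋀²ℂ⁴. In particular ρ commutes with ⋀²g when det g = 1 and anticommutes with ⋀²g when det g = −1. -/
import Mathlib


/- STATEMENT 4: For every g ∈ O₄(ℂ), one has ρ ∘ (⋀²g) = det(g) · (⋀²g) ∘ ρ as
linear maps on ⋀²ℂ⁴. -/

noncomputable section

open ExteriorAlgebra Matrix

/-- The antidiagonal matrix `J₄`. -/
def J4 : Matrix (Fin 4) (Fin 4) ℂ := !![0,0,0,1; 0,0,1,0; 0,1,0,0; 1,0,0,0]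

/-- The standard basis of `ℂ⁴`. -/
def e (i : Fin 4) : Fin 4 → ℂ := Pi.single i 1

/-- The wedge product `v ∧ w`, as an element of the second exterior power `⋀²ℂ⁴`. -/
def wedge (v w : Fin 4 → ℂ) : ⋀[ℂ]^2 (Fin 4 → ℂ) :=
  ⟨ιMulti ℂ 2 ![v, w], ιMulti_range ℂ 2 (Set.mem_range_self _)⟩

@[simp] lemma fin4_mk_0 (h : 0 < 4) : (⟨0, h⟩ : Fin 4) = 0 := rfl
@[simp] lemma fin4_mk_1 (h : 1 < 4) : (⟨1, h⟩ : Fin 4) = 1 := rfl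
@[simp] lemma fin4_mk_2 (h : 2 < 4) : (⟨2, h⟩ : Fin 4) = 2 := rfl
@[simp] lemma fin4_mk_3 (h : 3 < 4) : (⟨3, h⟩ : Fin 4) = 3 := rfl
@[simp] lemma fin6_mk_0 (h : 0 < 6) : (⟨0, h⟩ : Fin 6) = 0 := rfl
@[simp] lemma fin6_mk_1 (h : 1 < 6) : (⟨1, h⟩ : Fin 6) = 1 := rfl
@[simp] lemma fin6_mk_2 (h : 2 < 6) : (⟨2, h⟩ : Fin 6) = 2 := rfl
@[simp] lemma fin6_mk_3 (h : 3 < 6) : (⟨3, h⟩ : Fin 6) = 3 := rfl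
@[simp] lemma fin6_mk_4 (h : 4 < 6) : (⟨4, h⟩ : Fin 6) = 4 := rfl
@[simp] lemma fin6_mk_5 (h : 5 < 6) : (⟨5, h⟩ : Fin 6) = 5 := rfl
@[simp] lemma J4_00 : J4 0 0 = 0 := rfl
@[simp] lemma J4_01 : J4 0 1 = 0 := rfl
@[simp] lemma J4_02 : J4 0 2 = 0 := rfl
@[simp] lemma J4_03 : J4 0 3 = 1 := rfl
@[simp] lemma J4_10 : J4 1 0 = 0 := rfl
@[simp] lemma J4_11 : J4 1 1 = 0 := rfl
@[simp] lemma J4_12 : J4 1 2 = 1 := rfl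
@[simp] lemma J4_13 : J4 1 3 = 0 := rfl
@[simp] lemma J4_20 : J4 2 0 = 0 := rfl
@[simp] lemma J4_21 : J4 2 1 = 1 := rfl
@[simp] lemma J4_22 : J4 2 2 = 0 := rfl
@[simp] lemma J4_23 : J4 2 3 = 0 := rfl
@[simp] lemma J4_30 : J4 3 0 = 1 := rfl
@[simp] lemma J4_31 : J4 3 1 = 0 := rfl
@[simp] lemma J4_32 : J4 3 2 = 0 := rfl
@[simp] lemma J4_33 : J4 3 3 = 0 := rfl

lemma wedge_val (v w : Fin 4 → ℂ) :
    (wedge v w : ExteriorAlgebra ℂ (Fin 4 → ℂ)) = ι ℂ v * ι ℂ w := by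
  simp [wedge, ιMulti_apply, List.ofFn_succ]

def wedgeL : (Fin 4 → ℂ) →ₗ[ℂ] (Fin 4 → ℂ) →ₗ[ℂ] (⋀[ℂ]^2 (Fin 4 → ℂ)) where
  toFun v :=
    { toFun := fun w => wedge v w
      map_add' := fun w w' => Subtype.ext <| by simp [wedge_val, mul_add]
      map_smul' := fun c w => Subtype.ext <| by simp [wedge_val] }
  map_add' v v' := LinearMap.ext fun w => Subtype.ext <| by simp [wedge_val, add_mul]
  map_smul' c v := LinearMap.ext fun w => Subtype.ext <| by simp [wedge_val]

lemma wedgeL_apply (v w : Fin 4 → ℂ) : wedgeL v w = wedge v w := rfl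

lemma wedge_self (v : Fin 4 → ℂ) : wedge v v = 0 := Subtype.ext <| by
  simp [wedge_val, ι_sq_zero]

lemma wedge_swap (v w : Fin 4 → ℂ) : wedge v w = - wedge w v := Subtype.ext <| by
  have h := ι_add_mul_swap (R := ℂ) v w
  simp only [wedge_val, Submodule.coe_neg, wedge_val]
  exact eq_neg_of_add_eq_zero_left h

lemma basis_expand (v : Fin 4 → ℂ) : v = ∑ i, v i • e i := by
  funext k
  simp [e, Pi.single_apply, Finset.sum_apply, mul_comm]

lemma wedge_expand (v w : Fin 4 → ℂ) :
    wedge v w = ∑ i, ∑ j, (v i * w j) • wedge (e i) (e j) := by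
  have h1 : wedge v w = ∑ i, v i • wedge (e i) w := by
    conv_lhs => rw [← wedgeL_apply, basis_expand v]
    rw [map_sum, LinearMap.sum_apply]
    simp [wedgeL_apply]
  have h2 : ∀ i, wedge (e i) w = ∑ j, w j • wedge (e i) (e j) := fun i => by
    conv_lhs => rw [← wedgeL_apply, basis_expand w]
    rw [map_sum]
    simp [wedgeL_apply]
  rw [h1]
  simp_rw [h2, Finset.smul_sum, smul_smul]

lemma detExpand (g : Matrix (Fin 4) (Fin 4) ℂ) : g.det =
    g 0 0*g 1 1*g 2 2*g 3 3 - g 0 0*g 1 1*g 2 3*g 3 2 - g 0 0*g 1 2*g 2 1*g 3 3 + g 0 0*g 1 2*g 2 3*g 3 1 + g 0 0*g 1 3*g 2 1*g 3 2 - g 0 0*g 1 3*g 2 2*g 3 1 - g 0 1*g 1 0*g 2 2*g 3 3 + g 0 1*g 1 0*g 2 3*g 3 2 + g 0 1*g 1 2*g 2 0*g 3 3 - g 0 1*g 1 2*g 2 3*g 3 0 - g 0 1*g 1 3*g 2 0*g 3 2 + g 0 1*g 1 3*g 2 2*g 3 0 + g 0 2*g 1 0*g 2 1*g 3 3 - g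 0 2*g 1 0*g 2 3*g 3 1 - g 0 2*g 1 1*g 2 0*g 3 3 + g 0 2*g 1 1*g 2 3*g 3 0 + g 0 2*g 1 3*g 2 0*g 3 1 - g 0 2*g 1 3*g 2 1*g 3 0 - g 0 3*g 1 0*g 2 1*g 3 2 + g 0 3*g 1 0*g 2 2*g 3 1 + g 0 3*g 1 1*g 2 0*g 3 2 - g 0 3*g 1 1*g 2 2*g 3 0 - g 0 3*g 1 2*g 2 0*g 3 1 + g 0 3*g 1 2*g 2 1*g 3 0
    := by
  rw [Matrix.det_succ_row_zero]
  simp [Fin.sum_univ_succ, Matrix.det_fin_three, Matrix.submatrix_apply, Fin.succAbove,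
    show (Fin.succ 2 : Fin 4) = 3 from rfl, show (Fin.castSucc 2 : Fin 4) = 2 from rfl,
    show ((1:Fin 4) < 3) from by decide, show (Fin.succ 0 : Fin 4) = 1 from rfl,
    show (Fin.succ 1 : Fin 4) = 2 from rfl]
  ring

def Wm : Matrix (Fin 6) (Fin 6) ℂ := Matrix.of ![![0,0,0,0,0,1], ![0,0,0,0,(-1),0], ![0,0,0,1,0,0], ![0,0,1,0,0,0], ![0,(-1),0,0,0,0], ![1,0,0,0,0,0]]
def Km : Matrix (Fin 6) (Fin 6) ℂ := Matrix.of ![![0,0,0,0,0,(-1)], ![0,0,0,0,(-1),0], ![0,0,(-1),0,0,0], ![0,0,0,(-1),0,0], ![0,(-1),0,0,0,0], ![(-1),0,0,0,0,0]]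
def Rm : Matrix (Fin 6) (Fin 6) ℂ := Matrix.of ![![(-1),0,0,0,0,0], ![0,1,0,0,0,0], ![0,0,0,(-1),0,0], ![0,0,(-1),0,0,0], ![0,0,0,0,1,0], ![0,0,0,0,0,(-1)]]
@[simp] lemma Wm_00 : Wm 0 0 = 0 := rfl
@[simp] lemma Wm_01 : Wm 0 1 = 0 := rfl
@[simp] lemma Wm_02 : Wm 0 2 = 0 := rfl
@[simp] lemma Wm_03 : Wm 0 3 = 0 := rfl
@[simp] lemma Wm_04 : Wm 0 4 = 0 := rfl
@[simp] lemma Wm_05 : Wm 0 5 = 1 := rfl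
@[simp] lemma Wm_10 : Wm 1 0 = 0 := rfl
@[simp] lemma Wm_11 : Wm 1 1 = 0 := rfl
@[simp] lemma Wm_12 : Wm 1 2 = 0 := rfl
@[simp] lemma Wm_13 : Wm 1 3 = 0 := rfl
@[simp] lemma Wm_14 : Wm 1 4 = (-1) := rfl
@[simp] lemma Wm_15 : Wm 1 5 = 0 := rfl
@[simp] lemma Wm_20 : Wm 2 0 = 0 := rfl
@[simp] lemma Wm_21 : Wm 2 1 = 0 := rfl
@[simp] lemma Wm_22 : Wm 2 2 = 0 := rfl
@[simp] lemma Wm_23 : Wm 2 3 = 1 := rfl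
@[simp] lemma Wm_24 : Wm 2 4 = 0 := rfl
@[simp] lemma Wm_25 : Wm 2 5 = 0 := rfl
@[simp] lemma Wm_30 : Wm 3 0 = 0 := rfl
@[simp] lemma Wm_31 : Wm 3 1 = 0 := rfl
@[simp] lemma Wm_32 : Wm 3 2 = 1 := rfl
@[simp] lemma Wm_33 : Wm 3 3 = 0 := rfl
@[simp] lemma Wm_34 : Wm 3 4 = 0 := rfl
@[simp] lemma Wm_35 : Wm 3 5 = 0 := rfl
@[simp] lemma Wm_40 : Wm 4 0 = 0 := rfl
@[simp] lemma Wm_41 : Wm 4 1 = (-1) := rfl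
@[simp] lemma Wm_42 : Wm 4 2 = 0 := rfl
@[simp] lemma Wm_43 : Wm 4 3 = 0 := rfl
@[simp] lemma Wm_44 : Wm 4 4 = 0 := rfl
@[simp] lemma Wm_45 : Wm 4 5 = 0 := rfl
@[simp] lemma Wm_50 : Wm 5 0 = 1 := rfl
@[simp] lemma Wm_51 : Wm 5 1 = 0 := rfl
@[simp] lemma Wm_52 : Wm 5 2 = 0 := rfl
@[simp] lemma Wm_53 : Wm 5 3 = 0 := rfl
@[simp] lemma Wm_54 : Wm 5 4 = 0 := rfl
@[simp] lemma Wm_55 : Wm 5 5 = 0 := rfl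
@[simp] lemma Km_00 : Km 0 0 = 0 := rfl
@[simp] lemma Km_01 : Km 0 1 = 0 := rfl
@[simp] lemma Km_02 : Km 0 2 = 0 := rfl
@[simp] lemma Km_03 : Km 0 3 = 0 := rfl
@[simp] lemma Km_04 : Km 0 4 = 0 := rfl
@[simp] lemma Km_05 : Km 0 5 = (-1) := rfl
@[simp] lemma Km_10 : Km 1 0 = 0 := rfl
@[simp] lemma Km_11 : Km 1 1 = 0 := rfl
@[simp] lemma Km_12 : Km 1 2 = 0 := rfl
@[simp] lemma Km_13 : Km 1 3 = 0 := rfl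
@[simp] lemma Km_14 : Km 1 4 = (-1) := rfl
@[simp] lemma Km_15 : Km 1 5 = 0 := rfl
@[simp] lemma Km_20 : Km 2 0 = 0 := rfl
@[simp] lemma Km_21 : Km 2 1 = 0 := rfl
@[simp] lemma Km_22 : Km 2 2 = (-1) := rfl
@[simp] lemma Km_23 : Km 2 3 = 0 := rfl
@[simp] lemma Km_24 : Km 2 4 = 0 := rfl
@[simp] lemma Km_25 : Km 2 5 = 0 := rfl
@[simp] lemma Km_30 : Km 3 0 = 0 := rfl
@[simp] lemma Km_31 : Km 3 1 = 0 := rfl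
@[simp] lemma Km_32 : Km 3 2 = 0 := rfl
@[simp] lemma Km_33 : Km 3 3 = (-1) := rfl
@[simp] lemma Km_34 : Km 3 4 = 0 := rfl
@[simp] lemma Km_35 : Km 3 5 = 0 := rfl
@[simp] lemma Km_40 : Km 4 0 = 0 := rfl
@[simp] lemma Km_41 : Km 4 1 = (-1) := rfl
@[simp] lemma Km_42 : Km 4 2 = 0 := rfl
@[simp] lemma Km_43 : Km 4 3 = 0 := rfl
@[simp] lemma Km_44 : Km 4 4 = 0 := rfl
@[simp] lemma Km_45 : Km 4 5 = 0 := rfl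
@[simp] lemma Km_50 : Km 5 0 = (-1) := rfl
@[simp] lemma Km_51 : Km 5 1 = 0 := rfl
@[simp] lemma Km_52 : Km 5 2 = 0 := rfl
@[simp] lemma Km_53 : Km 5 3 = 0 := rfl
@[simp] lemma Km_54 : Km 5 4 = 0 := rfl
@[simp] lemma Km_55 : Km 5 5 = 0 := rfl
@[simp] lemma Rm_00 : Rm 0 0 = (-1) := rfl
@[simp] lemma Rm_01 : Rm 0 1 = 0 := rfl
@[simp] lemma Rm_02 : Rm 0 2 = 0 := rfl
@[simp] lemma Rm_03 : Rm 0 3 = 0 := rfl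
@[simp] lemma Rm_04 : Rm 0 4 = 0 := rfl
@[simp] lemma Rm_05 : Rm 0 5 = 0 := rfl
@[simp] lemma Rm_10 : Rm 1 0 = 0 := rfl
@[simp] lemma Rm_11 : Rm 1 1 = 1 := rfl
@[simp] lemma Rm_12 : Rm 1 2 = 0 := rfl
@[simp] lemma Rm_13 : Rm 1 3 = 0 := rfl
@[simp] lemma Rm_14 : Rm 1 4 = 0 := rfl
@[simp] lemma Rm_15 : Rm 1 5 = 0 := rfl
@[simp] lemma Rm_20 : Rm 2 0 = 0 := rfl
@[simp] lemma Rm_21 : Rm 2 1 = 0 := rfl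
@[simp] lemma Rm_22 : Rm 2 2 = 0 := rfl
@[simp] lemma Rm_23 : Rm 2 3 = (-1) := rfl
@[simp] lemma Rm_24 : Rm 2 4 = 0 := rfl
@[simp] lemma Rm_25 : Rm 2 5 = 0 := rfl
@[simp] lemma Rm_30 : Rm 3 0 = 0 := rfl
@[simp] lemma Rm_31 : Rm 3 1 = 0 := rfl
@[simp] lemma Rm_32 : Rm 3 2 = (-1) := rfl
@[simp] lemma Rm_33 : Rm 3 3 = 0 := rfl
@[simp] lemma Rm_34 : Rm 3 4 = 0 := rfl
@[simp] lemma Rm_35 : Rm 3 5 = 0 := rfl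
@[simp] lemma Rm_40 : Rm 4 0 = 0 := rfl
@[simp] lemma Rm_41 : Rm 4 1 = 0 := rfl
@[simp] lemma Rm_42 : Rm 4 2 = 0 := rfl
@[simp] lemma Rm_43 : Rm 4 3 = 0 := rfl
@[simp] lemma Rm_44 : Rm 4 4 = 1 := rfl
@[simp] lemma Rm_45 : Rm 4 5 = 0 := rfl
@[simp] lemma Rm_50 : Rm 5 0 = 0 := rfl
@[simp] lemma Rm_51 : Rm 5 1 = 0 := rfl
@[simp] lemma Rm_52 : Rm 5 2 = 0 := rfl
@[simp] lemma Rm_53 : Rm 5 3 = 0 := rfl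
@[simp] lemma Rm_54 : Rm 5 4 = 0 := rfl
@[simp] lemma Rm_55 : Rm 5 5 = (-1) := rfl
def pf : Fin 6 → Fin 4 := ![0,0,0,1,1,2]
def ps : Fin 6 → Fin 4 := ![1,2,3,2,3,3]
@[simp] lemma pf_0 : pf 0 = 0 := rfl
@[simp] lemma ps_0 : ps 0 = 1 := rfl
@[simp] lemma pf_1 : pf 1 = 0 := rfl
@[simp] lemma ps_1 : ps 1 = 2 := rfl
@[simp] lemma pf_2 : pf 2 = 0 := rfl
@[simp] lemma ps_2 : ps 2 = 3 := rfl
@[simp] lemma pf_3 : pf 3 = 1 := rfl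
@[simp] lemma ps_3 : ps 3 = 2 := rfl
@[simp] lemma pf_4 : pf 4 = 1 := rfl
@[simp] lemma ps_4 : ps 4 = 3 := rfl
@[simp] lemma pf_5 : pf 5 = 2 := rfl
@[simp] lemma ps_5 : ps 5 = 3 := rfl

def Pm (g : Matrix (Fin 4) (Fin 4) ℂ) : Matrix (Fin 6) (Fin 6) ℂ :=
  Matrix.of fun d a => g (pf d) (pf a) * g (ps d) (ps a) - g (ps d) (pf a) * g (pf d) (ps a)

@[simp] lemma Pm_apply (g : Matrix (Fin 4) (Fin 4) ℂ) (d a : Fin 6) :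
    Pm g d a = g (pf d) (pf a) * g (ps d) (ps a) - g (ps d) (pf a) * g (pf d) (ps a) := rfl

def comp2 (S : Matrix (Fin 4) (Fin 4) ℂ) : Matrix (Fin 6) (Fin 6) ℂ :=
  Matrix.of fun a b => S (pf a) (pf b) * S (ps a) (ps b) - S (pf a) (ps b) * S (ps a) (pf b)

@[simp] lemma comp2_apply (S : Matrix (Fin 4) (Fin 4) ℂ) (a b : Fin 6) :
    comp2 S a b = S (pf a) (pf b) * S (ps a) (ps b) - S (pf a) (ps b) * S (ps a) (pf b) := rfl


set_option maxHeartbeats 2000000 in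
lemma hA (g : Matrix (Fin 4) (Fin 4) ℂ) : (Pm g)ᵀ * Wm * Pm g = g.det • Wm := by
  rw [detExpand]
  ext d a
  fin_cases d <;> fin_cases a <;>
    (simp only [fin6_mk_0, fin6_mk_1, fin6_mk_2, fin6_mk_3, fin6_mk_4, fin6_mk_5, Matrix.mul_apply, Matrix.transpose_apply, Matrix.smul_apply,
      smul_eq_mul, Fin.sum_univ_six, Pm_apply, pf_0, ps_0, pf_1, ps_1, pf_2, ps_2, pf_3, ps_3, pf_4, ps_4, pf_5, ps_5, Wm_00, Wm_01, Wm_02, Wm_03, Wm_04, Wm_05, Wm_10, Wm_11, Wm_12, Wm_13, Wm_14, Wm_15, Wm_20, Wm_21, Wm_22, Wm_23, Wm_24, Wm_25, Wm_30, Wm_31, Wm_32, Wm_33, Wm_34, Wm_35, Wm_40, Wm_41, Wm_42, Wm_43, Wm_44, Wm_45, Wm_50, Wm_51, Wm_52, Wm_53, Wm_54, Wm_55]; ring)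

set_option maxHeartbeats 2000000 in
lemma hB (g : Matrix (Fin 4) (Fin 4) ℂ) : (Pm g)ᵀ * Km * Pm g = comp2 (gᵀ * J4 * g) := by
  ext d a
  fin_cases d <;> fin_cases a <;>
    (simp only [fin6_mk_0, fin6_mk_1, fin6_mk_2, fin6_mk_3, fin6_mk_4, fin6_mk_5, Matrix.mul_apply, Matrix.transpose_apply, Fin.sum_univ_six,
      Fin.sum_univ_four, Pm_apply, comp2_apply, pf_0, ps_0, pf_1, ps_1, pf_2, ps_2, pf_3, ps_3, pf_4, ps_4, pf_5, ps_5, Km_00, Km_01, Km_02, Km_03, Km_04, Km_05, Km_10, Km_11, Km_12, Km_13, Km_14, Km_15, Km_20, Km_21, Km_22, Km_23, Km_24, Km_25, Km_30, Km_31, Km_32, Km_33, Km_34, Km_35, Km_40, Km_41, Km_42, Km_43, Km_44, Km_45, Km_50, Km_51, Km_52, Km_53, Km_54, Km_55, J4_00, J4_01, J4_02, J4_03, J4_10, J4_11, J4_12, J4_13, J4_20, J4_21, J4_22, J4_23, J4_30, J4_31, J4_32, J4_33]; ring)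

lemma hCJ : comp2 J4 = Km := by
  ext d a
  fin_cases d <;> fin_cases a <;>
    (simp only [fin6_mk_0, fin6_mk_1, fin6_mk_2, fin6_mk_3, fin6_mk_4, fin6_mk_5, comp2_apply, pf_0, ps_0, pf_1, ps_1, pf_2, ps_2, pf_3, ps_3, pf_4, ps_4, pf_5, ps_5, Km_00, Km_01, Km_02, Km_03, Km_04, Km_05, Km_10, Km_11, Km_12, Km_13, Km_14, Km_15, Km_20, Km_21, Km_22, Km_23, Km_24, Km_25, Km_30, Km_31, Km_32, Km_33, Km_34, Km_35, Km_40, Km_41, Km_42, Km_43, Km_44, Km_45, Km_50, Km_51, Km_52, Km_53, Km_54, Km_55, J4_00, J4_01, J4_02, J4_03, J4_10, J4_11, J4_12, J4_13, J4_20, J4_21, J4_22, J4_23, J4_30, J4_31, J4_32, J4_33]; norm_num)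

lemma hWR : Wm * Rm = Km := by
  ext d a
  fin_cases d <;> fin_cases a <;>
    (simp only [fin6_mk_0, fin6_mk_1, fin6_mk_2, fin6_mk_3, fin6_mk_4, fin6_mk_5, Matrix.mul_apply, Fin.sum_univ_six, Wm_00, Wm_01, Wm_02, Wm_03, Wm_04, Wm_05, Wm_10, Wm_11, Wm_12, Wm_13, Wm_14, Wm_15, Wm_20, Wm_21, Wm_22, Wm_23, Wm_24, Wm_25, Wm_30, Wm_31, Wm_32, Wm_33, Wm_34, Wm_35, Wm_40, Wm_41, Wm_42, Wm_43, Wm_44, Wm_45, Wm_50, Wm_51, Wm_52, Wm_53, Wm_54, Wm_55, Rm_00, Rm_01, Rm_02, Rm_03, Rm_04, Rm_05, Rm_10, Rm_11, Rm_12, Rm_13, Rm_14, Rm_15, Rm_20, Rm_21, Rm_22, Rm_23, Rm_24, Rm_25, Rm_30, Rm_31, Rm_32, Rm_33, Rm_34, Rm_35, Rm_40, Rm_41, Rm_42, Rm_43, Rm_44, Rm_45, Rm_50, Rm_51, Rm_52, Rm_53, Rm_54, Rm_55, Km_00, Km_01, Km_02, Km_03, Km_04, Km_05, Km_10, Km_11,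 Km_12, Km_13, Km_14, Km_15, Km_20, Km_21, Km_22, Km_23, Km_24, Km_25, Km_30, Km_31, Km_32, Km_33, Km_34, Km_35, Km_40, Km_41, Km_42, Km_43, Km_44, Km_45, Km_50, Km_51, Km_52, Km_53, Km_54, Km_55]; norm_num)

lemma hWW : Wm * Wm = 1 := by
  ext d a
  fin_cases d <;> fin_cases a <;>
    (simp only [fin6_mk_0, fin6_mk_1, fin6_mk_2, fin6_mk_3, fin6_mk_4, fin6_mk_5, Matrix.mul_apply, Fin.sum_univ_six, Wm_00, Wm_01, Wm_02, Wm_03, Wm_04, Wm_05, Wm_10, Wm_11, Wm_12, Wm_13, Wm_14, Wm_15, Wm_20, Wm_21, Wm_22, Wm_23, Wm_24, Wm_25, Wm_30, Wm_31, Wm_32, Wm_33, Wm_34, Wm_35, Wm_40, Wm_41, Wm_42, Wm_43, Wm_44, Wm_45, Wm_50, Wm_51, Wm_52, Wm_53, Wm_54, Wm_55, Matrix.one_apply]; simp)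

lemma detJ4 : J4.det = 1 := by
  rw [detExpand]
  simp only [J4_00, J4_01, J4_02, J4_03, J4_10, J4_11, J4_12, J4_13, J4_20, J4_21, J4_22, J4_23, J4_30, J4_31, J4_32, J4_33]
  norm_num
def cvec (a : Fin 6) : ⋀[ℂ]^2 (Fin 4 → ℂ) := wedge (e (pf a)) (e (ps a))
@[simp] lemma cvec_0 : cvec 0 = wedge (e 0) (e 1) := rfl
@[simp] lemma cvec_1 : cvec 1 = wedge (e 0) (e 2) := rfl
@[simp] lemma cvec_2 : cvec 2 = wedge (e 0) (e 3) := rfl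
@[simp] lemma cvec_3 : cvec 3 = wedge (e 1) (e 2) := rfl
@[simp] lemma cvec_4 : cvec 4 = wedge (e 1) (e 3) := rfl
@[simp] lemma cvec_5 : cvec 5 = wedge (e 2) (e 3) := rfl
lemma wsw_10 : wedge (e 1) (e 0) = - wedge (e 0) (e 1) := wedge_swap _ _
lemma wsw_20 : wedge (e 2) (e 0) = - wedge (e 0) (e 2) := wedge_swap _ _
lemma wsw_30 : wedge (e 3) (e 0) = - wedge (e 0) (e 3) := wedge_swap _ _
lemma wsw_21 : wedge (e 2) (e 1) = - wedge (e 1) (e 2) := wedge_swap _ _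
lemma wsw_31 : wedge (e 3) (e 1) = - wedge (e 1) (e 3) := wedge_swap _ _
lemma wsw_32 : wedge (e 3) (e 2) = - wedge (e 2) (e 3) := wedge_swap _ _

lemma comp_sum {F H : (⋀[ℂ]^2 (Fin 4 → ℂ)) →ₗ[ℂ] (⋀[ℂ]^2 (Fin 4 → ℂ))}
    {M N : Matrix (Fin 6) (Fin 6) ℂ}
    (hF : ∀ a, F (cvec a) = ∑ d, M d a • cvec d)
    (hH : ∀ a, H (cvec a) = ∑ d, N d a • cvec d) (a : Fin 6) :
    F (H (cvec a)) = ∑ d, (M * N) d a • cvec d := by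
  rw [hH, map_sum]
  simp_rw [_root_.map_smul, hF, Finset.smul_sum, smul_smul]
  rw [Finset.sum_comm]
  refine Finset.sum_congr rfl fun d _ => ?_
  rw [Matrix.mul_apply, Finset.sum_smul]
  exact Finset.sum_congr rfl fun x _ => by rw [mul_comm]


set_option maxHeartbeats 2000000 in
theorem rho_commutes_with_orthogonal_similitude
    (g : Matrix (Fin 4) (Fin 4) ℂ)
    (horth : gᵀ * J4 * g = J4)
    (ρ : (⋀[ℂ]^2 (Fin 4 → ℂ)) →ₗ[ℂ] (⋀[ℂ]^2 (Fin 4 → ℂ)))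
    (h12 : ρ (wedge (e 0) (e 1)) = - wedge (e 0) (e 1))
    (h13 : ρ (wedge (e 0) (e 2)) = wedge (e 0) (e 2))
    (h14 : ρ (wedge (e 0) (e 3)) = - wedge (e 1) (e 2))
    (h23 : ρ (wedge (e 1) (e 2)) = - wedge (e 0) (e 3))
    (h24 : ρ (wedge (e 1) (e 3)) = wedge (e 1) (e 3))
    (h34 : ρ (wedge (e 2) (e 3)) = - wedge (e 2) (e 3))
    (Λ : (⋀[ℂ]^2 (Fin 4 → ℂ)) →ₗ[ℂ] (⋀[ℂ]^2 (Fin 4 → ℂ)))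
    (hΛ : ∀ v w : Fin 4 → ℂ, Λ (wedge v w) = wedge (g.mulVec v) (g.mulVec w)) :
    ρ ∘ₗ Λ = g.det • (Λ ∘ₗ ρ) := by
  have hD : g.det * g.det = 1 := by
    have h := congrArg Matrix.det horth
    rw [Matrix.det_mul, Matrix.det_mul, Matrix.det_transpose, detJ4] at h
    linear_combination h
  have hB' : (Pm g)ᵀ * Km * Pm g = Km := by rw [hB, horth, hCJ]
  have hPX : (Pm g)ᵀ * (g.det • (Wm * Pm g * Wm)) = 1 := by
    rw [Matrix.mul_smul, ← Matrix.mul_assoc, ← Matrix.mul_assoc, hA g, Matrix.smul_mul, hWW,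
      smul_smul, hD, one_smul]
  have hXP : (g.det • (Wm * Pm g * Wm)) * (Pm g)ᵀ = 1 := mul_eq_one_comm.mp hPX
  have cancelPT : ∀ {A B : Matrix (Fin 6) (Fin 6) ℂ}, (Pm g)ᵀ * A = (Pm g)ᵀ * B → A = B := by
    intro A B h
    have h2 := congrArg (fun M => (g.det • (Wm * Pm g * Wm)) * M) h
    simpa only [← Matrix.mul_assoc, hXP, Matrix.one_mul] using h2
  have cancelW : ∀ {A B : Matrix (Fin 6) (Fin 6) ℂ}, Wm * A = Wm * B → A = B := by
    intro A B h
    have h2 := congrArg (fun M => Wm * M) h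
    simpa only [← Matrix.mul_assoc, hWW, Matrix.one_mul] using h2
  have E1 : (Pm g)ᵀ * (Wm * (Rm * Pm g)) = Km := by
    rw [show Wm * (Rm * Pm g) = (Wm * Rm) * Pm g from (Matrix.mul_assoc _ _ _).symm, hWR,
      ← Matrix.mul_assoc]
    exact hB'
  have E2 : (Pm g)ᵀ * (Wm * (g.det • (Pm g * Rm))) = Km := by
    rw [Matrix.mul_smul, Matrix.mul_smul,
      show (Pm g)ᵀ * (Wm * (Pm g * Rm)) = ((Pm g)ᵀ * Wm * Pm g) * Rm from by
        rw [Matrix.mul_assoc, Matrix.mul_assoc], hA g, Matrix.smul_mul, smul_smul, hD, one_smul,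
      hWR]
  have hmat : Rm * Pm g = g.det • (Pm g * Rm) := cancelW (cancelPT (E1.trans E2.symm))
  have hmv : ∀ (i : Fin 4) (k : Fin 4), g.mulVec (e i) k = g k i := by
    intro i k
    simp [e, Matrix.mulVec_single]
  have L1 : ∀ a, ρ (cvec a) = ∑ d, Rm d a • cvec d := by
    intro a
    fin_cases a <;>
      simp only [fin6_mk_0, fin6_mk_1, fin6_mk_2, fin6_mk_3, fin6_mk_4, fin6_mk_5, cvec_0, cvec_1, cvec_2, cvec_3, cvec_4, cvec_5, Fin.sum_univ_six, Rm_00, Rm_01, Rm_02, Rm_03, Rm_04, Rm_05, Rm_10, Rm_11, Rm_12, Rm_13, Rm_14, Rm_15, Rm_20, Rm_21, Rm_22, Rm_23, Rm_24, Rm_25, Rm_30, Rm_31, Rm_32, Rm_33, Rm_34, Rm_35, Rm_40, Rm_41, Rm_42, Rm_43, Rm_44, Rm_45, Rm_50, Rm_51, Rm_52, Rm_53, Rm_54, Rm_55]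
    · rw [h12]; module
    · rw [h13]; module
    · rw [h14]; module
    · rw [h23]; module
    · rw [h24]; module
    · rw [h34]; module
  have L2 : ∀ a, Λ (cvec a) = ∑ d, Pm g d a • cvec d := by
    intro a
    fin_cases a <;>
      (simp only [fin6_mk_0, fin6_mk_1, fin6_mk_2, fin6_mk_3, fin6_mk_4, fin6_mk_5, cvec_0, cvec_1, cvec_2, cvec_3, cvec_4, cvec_5]
       rw [hΛ, wedge_expand]
       simp only [hmv, Fin.sum_univ_four, Fin.sum_univ_six, Pm_apply, pf_0, ps_0, pf_1, ps_1, pf_2, ps_2, pf_3, ps_3, pf_4, ps_4, pf_5, ps_5, cvec_0, cvec_1, cvec_2, cvec_3, cvec_4, cvec_5,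
         wedge_self, wsw_10, wsw_20, wsw_30, wsw_21, wsw_31, wsw_32, smul_zero, smul_neg]
       module)
  have C1 : ∀ a, ρ (Λ (cvec a)) = ∑ d, (Rm * Pm g) d a • cvec d := comp_sum L1 L2
  have C2 : ∀ a, Λ (ρ (cvec a)) = ∑ d, (Pm g * Rm) d a • cvec d := comp_sum L2 L1
  have key6 : ∀ a, ρ (Λ (cvec a)) = g.det • Λ (ρ (cvec a)) := by
    intro a
    rw [C1 a, C2 a, hmat, Finset.smul_sum]
    simp only [Matrix.smul_apply, smul_eq_mul, smul_smul]
  have key16 : ∀ i j : Fin 4, ρ (Λ (wedge (e i) (e j))) = g.det • Λ (ρ (wedge (e i) (e j))) := by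
    intro i j
    fin_cases i <;> fin_cases j <;>
      simp only [fin4_mk_0, fin4_mk_1, fin4_mk_2, fin4_mk_3, wedge_self, wsw_10, wsw_20, wsw_30, wsw_21, wsw_31, wsw_32, map_neg, map_zero, smul_zero, smul_neg, neg_inj]
    all_goals first
      | rfl
      | exact key6 0 | exact key6 1 | exact key6 2
      | exact key6 3 | exact key6 4 | exact key6 5
  have keyvw : ∀ v w : Fin 4 → ℂ, ρ (Λ (wedge v w)) = g.det • Λ (ρ (wedge v w)) := by
    intro v w
    rw [wedge_expand]
    simp only [map_sum, _root_.map_smul, Finset.smul_sum]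
    refine Finset.sum_congr rfl fun i _ => Finset.sum_congr rfl fun j _ => ?_
    rw [key16 i j, smul_comm]
  apply LinearMap.ext
  rintro ⟨x, hx⟩
  have hx' : x ∈ Submodule.span ℂ (Set.range (ιMulti ℂ 2 (M := Fin 4 → ℂ))) := by
    rw [ιMulti_span_fixedDegree]; exact hx
  simp only [LinearMap.comp_apply, LinearMap.smul_apply]
  refine Submodule.span_induction (p := fun y _ => ∀ hm : y ∈ ⋀[ℂ]^2 (Fin 4 → ℂ),
      ρ (Λ ⟨y, hm⟩) = g.det • Λ (ρ ⟨y, hm⟩)) ?_ ?_ ?_ ?_ hx' hx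
  · rintro y ⟨f, rfl⟩ hm
    have hf : (⟨ιMulti ℂ 2 f, hm⟩ : ⋀[ℂ]^2 (Fin 4 → ℂ)) = wedge (f 0) (f 1) := by
      apply Subtype.ext
      show ιMulti ℂ 2 f = ιMulti ℂ 2 ![f 0, f 1]
      congr 1
      funext k
      fin_cases k <;> rfl
    rw [hf]
    exact keyvw (f 0) (f 1)
  · intro hm
    have h0 : (⟨0, hm⟩ : ⋀[ℂ]^2 (Fin 4 → ℂ)) = 0 := rfl
    rw [h0]
    simp
  · intro y z hy hz hy' hz' hm
    rw [ιMulti_span_fixedDegree] at hy hz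
    have hadd : (⟨y + z, hm⟩ : ⋀[ℂ]^2 (Fin 4 → ℂ)) = ⟨y, hy⟩ + ⟨z, hz⟩ := rfl
    rw [hadd]
    simp only [map_add]
    rw [hy' hy, hz' hz, smul_add]
  · intro t y hy hy' hm
    rw [ιMulti_span_fixedDegree] at hy
    have hsmul : (⟨t • y, hm⟩ : ⋀[ℂ]^2 (Fin 4 → ℂ)) = t • (⟨y, hy⟩ : ⋀[ℂ]^2 (Fin 4 → ℂ)) := rfl
    rw [hsmul]
    simp only [_root_.map_smul]
    rw [hy' hy, smul_comm]

end
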